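/- arXiv:1906.02367 — 5 statements merged into one kernel-verified Lean document; each statement's English description precedes it below -/
import Mathlib

section
/- Let Comp_k ∈ {Top_k, Rand_k} and let Q_s : ℝ^d → ℝ^d be a randomized quantizer satisfying E_Q[Q_s(y)] = y and E_Q‖Q_s(y)‖² ≤ (1+β_{k,s})‖y‖² for all k-sparse y (where the second-moment bound on a k-sparse vector uses the constant β_{k,s}). If β_{k,s} < 1, then the composition Q_s∘Comp_k is a compression operator with coefficient γ = (1−β_{k,s})·(k/d), i.e., for every x ∈ ℝ^d, E_{C,Q}‖x − Q_s(Comp_k(x))‖₂² ≤ [1 − (1−β_{k,s})(k/d)]‖x‖₂². -/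
open MeasureTheory
open scoped RealInnerProductSpace

/-! For a fixed sparsified vector `y = C ω`, unbiasedness of the quantizer gives the
bias-variance identity `E_Q ‖x - Q y‖² = ‖x‖² - 2⟪x, y⟫ + E_Q ‖Q y‖²`. Since `⟪x, y⟫ = ‖y‖²`
and `E_Q ‖Q y‖² ≤ (1 + β) ‖y‖²`, this is at most `‖x‖² - (1 - β) ‖y‖²`. Averaging over the
sparsifier and using `E_C ‖C‖² ≥ (k/d) ‖x‖²` (with `1 - β ≥ 0`) gives the claim. -/

section

variable {Ω E : Type*} [MeasurableSpace Ω] {μ : Measure Ω} [NormedAddCommGroup E]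

theorem integrable_norm_const_sub_sq [IsFiniteMeasure μ] {Z : Ω → E} (hZ : Integrable Z μ)
    (hZ2 : Integrable (fun ω => ‖Z ω‖ ^ 2) μ) (x : E) :
    Integrable (fun ω => ‖x - Z ω‖ ^ 2) μ := by
  have hL2 : MemLp Z 2 μ := (memLp_two_iff_integrable_sq_norm hZ.1).2 hZ2
  exact (memLp_two_iff_integrable_sq_norm (aestronglyMeasurable_const.sub hZ.1)).1
    ((memLp_const x).sub hL2)

variable [InnerProductSpace ℝ E]

theorem norm_sq_le_norm_sq_of_inner_eq_norm_sq {x y : E} (h : ⟪x, y⟫ = ‖y‖ ^ 2) :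
    ‖y‖ ^ 2 ≤ ‖x‖ ^ 2 := by
  have := real_inner_le_norm x y
  nlinarith [norm_nonneg x, norm_nonneg y]

theorem integral_norm_const_sub_sq [CompleteSpace E] [IsProbabilityMeasure μ] {Z : Ω → E}
    (hZ : Integrable Z μ) (hZ2 : Integrable (fun ω => ‖Z ω‖ ^ 2) μ) (x : E) :
    ∫ ω, ‖x - Z ω‖ ^ 2 ∂μ = ‖x‖ ^ 2 - 2 * ⟪x, ∫ ω, Z ω ∂μ⟫ + ∫ ω, ‖Z ω‖ ^ 2 ∂μ := by
  have hinner : Integrable (fun ω => 2 * ⟪x, Z ω⟫) μ := (hZ.const_inner x).const_mul 2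
  have hlinear : Integrable (fun ω => ‖x‖ ^ 2 - 2 * ⟪x, Z ω⟫) μ :=
    (integrable_const _).sub hinner
  simp_rw [norm_sub_sq_real]
  rw [integral_add hlinear hZ2,
    integral_sub (integrable_const _) hinner, integral_const, integral_const_mul,
    integral_inner hZ]
  simp

theorem integral_norm_sub_sq_le_of_integral_eq [CompleteSpace E] [IsProbabilityMeasure μ]
    {β : ℝ} (hβ : 0 ≤ β) {x y : E} {Z : Ω → E} (hZ : Integrable Z μ)
    (hmean : ∫ ω, Z ω ∂μ = y) (hmoment : ∫ ω, ‖Z ω‖ ^ 2 ∂μ ≤ (1 + β) * ‖y‖ ^ 2)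
    (hxy : ⟪x, y⟫ = ‖y‖ ^ 2) :
    ∫ ω, ‖x - Z ω‖ ^ 2 ∂μ ≤ ‖x‖ ^ 2 - (1 - β) * ‖y‖ ^ 2 := by
  by_cases hint : Integrable (fun ω => ‖x - Z ω‖ ^ 2) μ
  · have hZ2 : Integrable (fun ω => ‖Z ω‖ ^ 2) μ := by
      simpa using integrable_norm_const_sub_sq ((integrable_const x).sub hZ) hint x
    rw [integral_norm_const_sub_sq hZ hZ2, hmean, hxy]
    linarith
  · -- the Bochner integral is `0` here, and `‖y‖ ≤ ‖x‖` keeps the right-hand side nonnegative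
    rw [integral_undef hint]
    have hyx := norm_sq_le_norm_sq_of_inner_eq_norm_sq hxy
    nlinarith [mul_nonneg hβ (sq_nonneg ‖y‖)]

end

theorem composed_operator_compression_general {ΩC ΩQ : Type*} [MeasurableSpace ΩC]
    [MeasurableSpace ΩQ] (μC : Measure ΩC) (μQ : Measure ΩQ)
    [IsProbabilityMeasure μC] [IsProbabilityMeasure μQ]
    (d k : ℕ)
    (β : ℝ) (hβ0 : 0 < β) (hβ : β < 1)
    (x : EuclideanSpace ℝ (Fin d))
    (C : ΩC → EuclideanSpace ℝ (Fin d))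
    (Q : EuclideanSpace ℝ (Fin d) → ΩQ → EuclideanSpace ℝ (Fin d))
    (hQint : ∀ y, Integrable (fun ωq => Q y ωq) μQ)
    (hQunbiased : ∀ y, ∫ ωq, Q y ωq ∂μQ = y)
    (hQmoment : ∀ ωc, ∫ ωq, ‖Q (C ωc) ωq‖ ^ 2 ∂μQ ≤ (1 + β) * ‖C ωc‖ ^ 2)
    (hCinner : ∀ ωc, ⟪x, C ωc⟫ = ‖C ωc‖ ^ 2)
    (hClower : (k : ℝ) / d * ‖x‖ ^ 2 ≤ ∫ ωc, ‖C ωc‖ ^ 2 ∂μC)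
    (hCint : Integrable (fun ωc => ‖C ωc‖ ^ 2) μC)
    (hint : Integrable (fun ωc => ∫ ωq, ‖x - Q (C ωc) ωq‖ ^ 2 ∂μQ) μC) :
    ∫ ωc, ∫ ωq, ‖x - Q (C ωc) ωq‖ ^ 2 ∂μQ ∂μC ≤
      (1 - (1 - β) * ((k : ℝ) / d)) * ‖x‖ ^ 2 := by
  have hpointwise (ωc : ΩC) :
      ∫ ωq, ‖x - Q (C ωc) ωq‖ ^ 2 ∂μQ ≤ ‖x‖ ^ 2 - (1 - β) * ‖C ωc‖ ^ 2 :=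
    integral_norm_sub_sq_le_of_integral_eq hβ0.le (hQint _) (hQunbiased _) (hQmoment ωc)
      (hCinner ωc)
  have hbound : Integrable (fun ωc => ‖x‖ ^ 2 - (1 - β) * ‖C ωc‖ ^ 2) μC :=
    (integrable_const _).sub (hCint.const_mul _)
  calc ∫ ωc, ∫ ωq, ‖x - Q (C ωc) ωq‖ ^ 2 ∂μQ ∂μC
      ≤ ∫ ωc, (‖x‖ ^ 2 - (1 - β) * ‖C ωc‖ ^ 2) ∂μC := integral_mono hint hbound hpointwise
    _ = ‖x‖ ^ 2 - (1 - β) * ∫ ωc, ‖C ωc‖ ^ 2 ∂μC := by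
      rw [integral_sub (integrable_const _) (hCint.const_mul _), integral_const,
        integral_const_mul]
      simp
    _ ≤ (1 - (1 - β) * ((k : ℝ) / d)) * ‖x‖ ^ 2 := by
      nlinarith [mul_le_mul_of_nonneg_left hClower (sub_nonneg.2 hβ.le)]

/-- Compression of a composed operator: composing an unbiased randomized quantizer `Q`
(with second-moment blow-up `1 + β` on the `k`-sparse outputs of the sparsifier `C`)
with a sparsifier `C` satisfying `⟨x, C(x)⟩ = ‖C(x)‖²` and `E‖C(x)‖² ≥ (k/d)‖x‖²`
yields, when `β < 1`, a compression operator with coefficient `(1-β)(k/d)`. -/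
theorem composed_operator_compression {ΩC ΩQ : Type*} [MeasurableSpace ΩC]
    [MeasurableSpace ΩQ] (μC : Measure ΩC) (μQ : Measure ΩQ)
    [IsProbabilityMeasure μC] [IsProbabilityMeasure μQ]
    (d k : ℕ) (hd : 0 < d) (hk : 1 ≤ k) (hkd : k ≤ d)
    (β : ℝ) (hβ0 : 0 < β) (hβ : β < 1)
    (x : EuclideanSpace ℝ (Fin d))
    (C : ΩC → EuclideanSpace ℝ (Fin d))
    (Q : EuclideanSpace ℝ (Fin d) → ΩQ → EuclideanSpace ℝ (Fin d))
    (hQint : ∀ y, Integrable (fun ωq => Q y ωq) μQ)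
    (hQunbiased : ∀ y, ∫ ωq, Q y ωq ∂μQ = y)
    (hQmoment : ∀ ωc, ∫ ωq, ‖Q (C ωc) ωq‖ ^ 2 ∂μQ ≤ (1 + β) * ‖C ωc‖ ^ 2)
    (hCinner : ∀ ωc, ⟪x, C ωc⟫ = ‖C ωc‖ ^ 2)
    (hClower : (k : ℝ) / d * ‖x‖ ^ 2 ≤ ∫ ωc, ‖C ωc‖ ^ 2 ∂μC)
    (hCint : Integrable (fun ωc => ‖C ωc‖ ^ 2) μC)
    (hint : Integrable (fun ωc => ∫ ωq, ‖x - Q (C ωc) ωq‖ ^ 2 ∂μQ) μC) :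
    ∫ ωc, ∫ ωq, ‖x - Q (C ωc) ωq‖ ^ 2 ∂μQ ∂μC ≤
      (1 - (1 - β) * ((k : ℝ) / d)) * ‖x‖ ^ 2 :=
  composed_operator_compression_general μC μQ d k β hβ0 hβ x C Q hQint hQunbiased hQmoment hCinner
    hClower hCint hint
end

section
/- Let Comp_k ∈ {Top_k, Rand_k} and let Q_s be an unbiased randomized quantizer with second-moment blowup β_{k,s} on k-sparse vectors. Then the scaled composed operator x ↦ Q_s(Comp_k(x))/(1+β_{k,s}) is a compression operator with coefficient γ = k/(d(1+β_{k,s})): for every x ∈ ℝ^d, E_{C,Q}‖x − Q_s(Comp_k(x))/(1+β_{k,s})‖₂² ≤ [1 − k/(d(1+β_{k,s}))]‖x‖₂². This holds for all β_{k,s} > 0 (no restriction β_{k,s} < 1 is needed). -/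
open MeasureTheory
open scoped RealInnerProductSpace

/-! Write `a = (1+β)⁻¹` and `y = C(ω)`. Expanding the square and using unbiasedness of `Q`,
`E_Q ‖x - a Q(y)‖² = ‖x‖² - 2a⟪x, y⟫ + a² E_Q ‖Q(y)‖² ≤ ‖x‖² - 2a‖y‖² + a²(1+β)‖y‖² = ‖x‖² - a‖y‖²`,
because `⟪x, y⟫ = ‖y‖²`; the scaling by `(1+β)⁻¹` is exactly what makes the last two terms
collapse, for every `β ≥ 0`. Averaging over `C` and using `E_C ‖C‖² ≥ (k/d)‖x‖²` gives the bound. -/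

section NormSq

variable {E : Type*} [NormedAddCommGroup E] {Ω : Type*} [MeasurableSpace Ω] {μ : Measure Ω}

theorem integrable_sq_norm_of_integrable_sq_norm_sub [IsFiniteMeasure μ] (x : E) {Z : Ω → E}
    (hZ : AEStronglyMeasurable Z μ) (h : Integrable (fun ω => ‖x - Z ω‖ ^ 2) μ) :
    Integrable (fun ω => ‖Z ω‖ ^ 2) μ := by
  have hsub : MemLp (fun ω => x - Z ω) 2 μ :=
    (memLp_two_iff_integrable_sq_norm (aestronglyMeasurable_const.sub hZ)).2 h
  have hZ2 : MemLp Z 2 μ := by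
    convert (memLp_const x).sub hsub using 1
    ext ω
    simp
  exact (memLp_two_iff_integrable_sq_norm hZ).1 hZ2

variable [InnerProductSpace ℝ E]

theorem norm_le_of_inner_eq_norm_sq {x y : E} (h : ⟪x, y⟫ = ‖y‖ ^ 2) : ‖y‖ ≤ ‖x‖ := by
  rcases (norm_nonneg y).eq_or_lt with hy | hy
  · rw [← hy]; exact norm_nonneg x
  · have hxy : ‖y‖ * ‖y‖ ≤ ‖x‖ * ‖y‖ := by
      rw [← sq, ← h]; exact real_inner_le_norm x y
    exact le_of_mul_le_mul_right hxy hy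

variable [CompleteSpace E]

theorem integral_norm_sub_sq [IsProbabilityMeasure μ] (x : E) {Z : Ω → E}
    (hZ : Integrable Z μ) (hZ2 : Integrable (fun ω => ‖Z ω‖ ^ 2) μ) :
    ∫ ω, ‖x - Z ω‖ ^ 2 ∂μ = ‖x‖ ^ 2 - 2 * ⟪x, ∫ ω, Z ω ∂μ⟫ + ∫ ω, ‖Z ω‖ ^ 2 ∂μ := by
  have hinner : Integrable (fun ω => ⟪x, Z ω⟫) μ := hZ.const_inner x
  simp_rw [norm_sub_sq_real]
  rw [integral_add (f := fun ω => ‖x‖ ^ 2 - 2 * ⟪x, Z ω⟫)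
    ((integrable_const _).sub (hinner.const_mul 2)) hZ2,
    integral_sub (integrable_const _) (hinner.const_mul 2), integral_const, integral_const_mul,
    integral_inner hZ]
  simp

theorem integral_norm_sub_inv_smul_sq_le [IsProbabilityMeasure μ] {x y : E} {Z : Ω → E}
    {β : ℝ} (hβ : 0 ≤ β) (hxy : ⟪x, y⟫ = ‖y‖ ^ 2) (hZ : Integrable Z μ)
    (hZmean : ∫ ω, Z ω ∂μ = y) (hZmoment : ∫ ω, ‖Z ω‖ ^ 2 ∂μ ≤ (1 + β) * ‖y‖ ^ 2) :
    ∫ ω, ‖x - (1 + β)⁻¹ • Z ω‖ ^ 2 ∂μ ≤ ‖x‖ ^ 2 - (1 + β)⁻¹ * ‖y‖ ^ 2 := by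
  set a := (1 + β)⁻¹
  have ha : 0 < a := inv_pos.2 (by linarith)
  have ha1 : a ≤ 1 := inv_le_one_of_one_le₀ (by linarith)
  have haβ : a * (1 + β) = 1 := inv_mul_cancel₀ (by linarith)
  by_cases hint : Integrable (fun ω => ‖x - a • Z ω‖ ^ 2) μ
  · have haZ : Integrable (fun ω => a • Z ω) μ := hZ.smul a
    have haZ2 := integrable_sq_norm_of_integrable_sq_norm_sub x haZ.1 hint
    have hmoment : a ^ 2 * ∫ ω, ‖Z ω‖ ^ 2 ∂μ ≤ a * ‖y‖ ^ 2 := by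
      calc a ^ 2 * ∫ ω, ‖Z ω‖ ^ 2 ∂μ ≤ a ^ 2 * ((1 + β) * ‖y‖ ^ 2) := by gcongr
        _ = a * ‖y‖ ^ 2 := by linear_combination (a * ‖y‖ ^ 2) * haβ
    rw [integral_norm_sub_sq x haZ haZ2, integral_smul, hZmean, inner_smul_right, hxy]
    simp_rw [norm_smul, mul_pow, Real.norm_of_nonneg ha.le]
    rw [integral_const_mul]
    linarith
  -- Otherwise the Bochner integral is the junk value `0`, and the bound needs `‖y‖ ≤ ‖x‖`, `a ≤ 1`.
  · rw [integral_undef hint, sub_nonneg]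
    calc a * ‖y‖ ^ 2 ≤ 1 * ‖x‖ ^ 2 := by
          gcongr
          exact norm_le_of_inner_eq_norm_sq hxy
      _ = ‖x‖ ^ 2 := one_mul _

end NormSq

theorem scaled_composed_operator_compression_general {ΩC ΩQ : Type*} [MeasurableSpace ΩC]
    [MeasurableSpace ΩQ] (μC : Measure ΩC) (μQ : Measure ΩQ)
    [IsProbabilityMeasure μC] [IsProbabilityMeasure μQ]
    (d k : ℕ)
    (β : ℝ) (hβ0 : 0 < β)
    (x : EuclideanSpace ℝ (Fin d))
    (C : ΩC → EuclideanSpace ℝ (Fin d))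
    (Q : EuclideanSpace ℝ (Fin d) → ΩQ → EuclideanSpace ℝ (Fin d))
    (hQint : ∀ y, Integrable (fun ωq => Q y ωq) μQ)
    (hQunbiased : ∀ y, ∫ ωq, Q y ωq ∂μQ = y)
    (hQmoment : ∀ ωc, ∫ ωq, ‖Q (C ωc) ωq‖ ^ 2 ∂μQ ≤ (1 + β) * ‖C ωc‖ ^ 2)
    (hCinner : ∀ ωc, ⟪x, C ωc⟫ = ‖C ωc‖ ^ 2)
    (hClower : (k : ℝ) / d * ‖x‖ ^ 2 ≤ ∫ ωc, ‖C ωc‖ ^ 2 ∂μC)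
    (hCint : Integrable (fun ωc => ‖C ωc‖ ^ 2) μC)
    (hint : Integrable (fun ωc => ∫ ωq, ‖x - (1 + β)⁻¹ • Q (C ωc) ωq‖ ^ 2 ∂μQ) μC) :
    ∫ ωc, ∫ ωq, ‖x - (1 + β)⁻¹ • Q (C ωc) ωq‖ ^ 2 ∂μQ ∂μC ≤
      (1 - (k : ℝ) / (d * (1 + β))) * ‖x‖ ^ 2 := by
  have hinner_bound : ∀ ωc, ∫ ωq, ‖x - (1 + β)⁻¹ • Q (C ωc) ωq‖ ^ 2 ∂μQ ≤
      ‖x‖ ^ 2 - (1 + β)⁻¹ * ‖C ωc‖ ^ 2 := fun ωc =>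
    integral_norm_sub_inv_smul_sq_le hβ0.le (hCinner ωc) (hQint _) (hQunbiased _) (hQmoment ωc)
  calc ∫ ωc, ∫ ωq, ‖x - (1 + β)⁻¹ • Q (C ωc) ωq‖ ^ 2 ∂μQ ∂μC
      ≤ ∫ ωc, (‖x‖ ^ 2 - (1 + β)⁻¹ * ‖C ωc‖ ^ 2) ∂μC :=
        integral_mono hint ((integrable_const _).sub (hCint.const_mul _)) hinner_bound
    _ = ‖x‖ ^ 2 - (1 + β)⁻¹ * ∫ ωc, ‖C ωc‖ ^ 2 ∂μC := by
        rw [integral_sub (integrable_const _) (hCint.const_mul _), integral_const,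
          integral_const_mul]
        simp
    _ ≤ ‖x‖ ^ 2 - (1 + β)⁻¹ * ((k : ℝ) / d * ‖x‖ ^ 2) := by
        gcongr
    _ = (1 - (k : ℝ) / (d * (1 + β))) * ‖x‖ ^ 2 := by
        rw [← div_div]; ring

/-- Scaled composed operator: for any `β > 0`, the scaled operator
`x ↦ Q(C(x)) / (1+β)` is a compression operator with coefficient `k/(d(1+β))`. -/
theorem scaled_composed_operator_compression {ΩC ΩQ : Type*} [MeasurableSpace ΩC]
    [MeasurableSpace ΩQ] (μC : Measure ΩC) (μQ : Measure ΩQ)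
    [IsProbabilityMeasure μC] [IsProbabilityMeasure μQ]
    (d k : ℕ) (hd : 0 < d) (hk : 1 ≤ k) (hkd : k ≤ d)
    (β : ℝ) (hβ0 : 0 < β)
    (x : EuclideanSpace ℝ (Fin d))
    (C : ΩC → EuclideanSpace ℝ (Fin d))
    (Q : EuclideanSpace ℝ (Fin d) → ΩQ → EuclideanSpace ℝ (Fin d))
    (hQint : ∀ y, Integrable (fun ωq => Q y ωq) μQ)
    (hQunbiased : ∀ y, ∫ ωq, Q y ωq ∂μQ = y)
    (hQmoment : ∀ ωc, ∫ ωq, ‖Q (C ωc) ωq‖ ^ 2 ∂μQ ≤ (1 + β) * ‖C ωc‖ ^ 2)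
    (hCinner : ∀ ωc, ⟪x, C ωc⟫ = ‖C ωc‖ ^ 2)
    (hClower : (k : ℝ) / d * ‖x‖ ^ 2 ≤ ∫ ωc, ‖C ωc‖ ^ 2 ∂μC)
    (hCint : Integrable (fun ωc => ‖C ωc‖ ^ 2) μC)
    (hint : Integrable (fun ωc => ∫ ωq, ‖x - (1 + β)⁻¹ • Q (C ωc) ωq‖ ^ 2 ∂μQ) μC) :
    ∫ ωc, ∫ ωq, ‖x - (1 + β)⁻¹ • Q (C ωc) ωq‖ ^ 2 ∂μQ ∂μC ≤
      (1 - (k : ℝ) / (d * (1 + β))) * ‖x‖ ^ 2 :=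
  scaled_composed_operator_compression_general μC μQ d k β hβ0 x C Q hQint hQunbiased hQmoment
    hCinner hClower hCint hint
end

section
/- For Comp_k ∈ {Top_k, Rand_k} and any m ≥ 2, the operator x ↦ (‖Comp_k(x)‖_m / k) · SignComp_k(x) is a compression operator with coefficient γ_m = k^{2/m − 1}/d: for every x ∈ ℝ^d, E‖x − (‖Comp_k(x)‖_m/k)·SignComp_k(x)‖₂² ≤ [1 − k^{2/m−1}/d]‖x‖₂². -/
open Finset MeasureTheory

/-!
With `T` the chosen support, `N = ‖x_T‖_m` and `c = N / k`, the cross term is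
`c ⟨x, SignComp_k x⟩ = c ‖x_T‖₁ ≥ c N` and `‖SignComp_k x‖₂² ≤ k`, so
`‖x - c SignComp_k x‖₂² ≤ ‖x‖₂² - N² / k` (this `c` minimises the quadratic bound).
Hölder on the `k`-sparse `x_T` gives `N² ≥ k^{2/m - 1} ‖x_T‖₂²`, and taking expectations with
`E ‖x_T‖₂² ≥ (k/d) ‖x‖₂²` gives the coefficient `k^{2/m - 1} / d`.
-/

section

variable {ι : Type*}

theorem sum_rpow_le_rpow_sum {s : Finset ι} {f : ι → ℝ} {p : ℝ} (hf : ∀ i ∈ s, 0 ≤ f i)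
    (hp : 1 ≤ p) : ∑ i ∈ s, f i ^ p ≤ (∑ i ∈ s, f i) ^ p := by
  induction s using Finset.cons_induction with
  | empty => simp [Real.zero_rpow (by linarith : p ≠ 0)]
  | cons a s _ ih =>
    rw [sum_cons, sum_cons]
    have hfs := fun i hi => hf i (mem_cons_of_mem hi)
    calc f a ^ p + ∑ i ∈ s, f i ^ p ≤ f a ^ p + (∑ i ∈ s, f i) ^ p := by gcongr; exact ih hfs
      _ ≤ (f a + ∑ i ∈ s, f i) ^ p :=
        Real.add_rpow_le_rpow_add (hf a (mem_cons_self a s)) (sum_nonneg hfs) hp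

noncomputable def lpNormOn (p : ℝ) (T : Finset ι) (x : ι → ℝ) : ℝ :=
  (∑ j ∈ T, |x j| ^ p) ^ p⁻¹

noncomputable def signOn [DecidableEq ι] (T : Finset ι) (x : ι → ℝ) (i : ι) : ℝ :=
  if i ∈ T then (if 0 ≤ x i then 1 else -1) else 0

/-- `(‖Comp_k(x)‖_p / k) · SignComp_k(x)` when `T` is the support chosen by `Comp_k`. -/
noncomputable def signCompress [DecidableEq ι] (p : ℝ) (k : ℕ) (T : Finset ι) (x : ι → ℝ)
    (i : ι) : ℝ :=
  lpNormOn p T x / k * signOn T x i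

variable (T : Finset ι) (x : ι → ℝ) {p : ℝ}

theorem lpNormOn_nonneg : 0 ≤ lpNormOn p T x :=
  Real.rpow_nonneg (sum_nonneg fun _ _ => Real.rpow_nonneg (abs_nonneg _) _) _

theorem lpNormOn_le_sum_abs (hp : 1 ≤ p) : lpNormOn p T x ≤ ∑ j ∈ T, |x j| := by
  have hp0 : 0 < p := by linarith
  have hsum : 0 ≤ ∑ j ∈ T, |x j| := sum_nonneg fun _ _ => abs_nonneg _
  calc lpNormOn p T x ≤ ((∑ j ∈ T, |x j|) ^ p) ^ p⁻¹ :=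
        Real.rpow_le_rpow (sum_nonneg fun _ _ => Real.rpow_nonneg (abs_nonneg _) _)
          (sum_rpow_le_rpow_sum (fun _ _ => abs_nonneg _) hp) (inv_nonneg.mpr hp0.le)
    _ = ∑ j ∈ T, |x j| := Real.rpow_rpow_inv hsum hp0.ne'

theorem sum_sq_le_card_rpow_mul_lpNormOn_sq (hp : 2 ≤ p) :
    ∑ j ∈ T, x j ^ 2 ≤ (#T : ℝ) ^ (1 - 2 / p) * lpNormOn p T x ^ 2 := by
  have hq : 1 ≤ p / 2 := by linarith
  have hpow : ∀ j, (x j ^ 2) ^ (p / 2) = |x j| ^ p := fun j => by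
    rw [← sq_abs, ← Real.rpow_natCast, ← Real.rpow_mul (abs_nonneg _)]
    congr 1
    ring
  have hN : lpNormOn p T x ^ 2 = (∑ j ∈ T, |x j| ^ p) ^ (p / 2)⁻¹ := by
    rw [lpNormOn, ← Real.rpow_natCast, ← Real.rpow_mul
      (sum_nonneg fun _ _ => Real.rpow_nonneg (abs_nonneg _) _)]
    congr 1
    ring
  have holder := Real.inner_le_weight_mul_Lp_of_nonneg T hq (fun _ => 1) (fun j => x j ^ 2)
    (fun _ => zero_le_one) (fun _ => sq_nonneg _)
  simp only [one_mul, hpow, sum_const, nsmul_eq_mul, mul_one] at holder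
  rwa [hN, show 1 - 2 / p = 1 - (p / 2)⁻¹ by rw [inv_div]]

variable [Fintype ι] [DecidableEq ι]

theorem sum_sq_sub_mul_signOn (c : ℝ) :
    ∑ i, (x i - c * signOn T x i) ^ 2 =
      ∑ i, x i ^ 2 - 2 * c * ∑ j ∈ T, |x j| + c ^ 2 * #T := by
  have hterm : ∀ i, (x i - c * signOn T x i) ^ 2 =
      x i ^ 2 - 2 * c * (if i ∈ T then |x i| else 0) + c ^ 2 * (if i ∈ T then 1 else 0) := by
    intro i
    by_cases hi : i ∈ T
    · by_cases hx : 0 ≤ x i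
      · simp [signOn, hi, hx, abs_of_nonneg hx]; ring
      · simp [signOn, hi, hx, abs_of_neg (not_le.mp hx)]; ring
    · simp [signOn, hi]
  simp only [hterm, sum_add_distrib, sum_sub_distrib, ← mul_sum, sum_ite_mem, univ_inter,
    sum_const, nsmul_eq_mul, mul_one]

theorem sum_sq_sub_signCompress_le {k : ℕ} (hp : 1 ≤ p) (hk : 0 < k) (hT : #T ≤ k) :
    ∑ i, (x i - signCompress p k T x i) ^ 2 ≤ ∑ i, x i ^ 2 - lpNormOn p T x ^ 2 / k := by
  set N := lpNormOn p T x
  have hk' : (0 : ℝ) < k := by exact_mod_cast hk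
  have hc : 0 ≤ N / k := div_nonneg (lpNormOn_nonneg T x) hk'.le
  simp only [signCompress]
  rw [sum_sq_sub_mul_signOn]
  calc ∑ i, x i ^ 2 - 2 * (N / k) * ∑ j ∈ T, |x j| + (N / k) ^ 2 * #T
      ≤ ∑ i, x i ^ 2 - 2 * (N / k) * N + (N / k) ^ 2 * k := by
        gcongr
        exact lpNormOn_le_sum_abs T x hp
    _ = ∑ i, x i ^ 2 - N ^ 2 / k := by field_simp; ring

theorem sum_sq_sub_signCompress_le_sub_rpow {k : ℕ} (hp : 2 ≤ p) (hk : 1 ≤ k) (hT : #T ≤ k) :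
    ∑ i, (x i - signCompress p k T x i) ^ 2 ≤
      ∑ i, x i ^ 2 - (k : ℝ) ^ (2 / p - 2) * ∑ j ∈ T, x j ^ 2 := by
  have hk' : (0 : ℝ) < k := by exact_mod_cast hk
  have hexp : 0 ≤ 1 - 2 / p := by
    rw [sub_nonneg, div_le_one (by linarith)]
    linarith
  have hsparse : (k : ℝ) ^ (2 / p - 2) * ∑ j ∈ T, x j ^ 2 ≤ lpNormOn p T x ^ 2 / k :=
    calc (k : ℝ) ^ (2 / p - 2) * ∑ j ∈ T, x j ^ 2
        ≤ (k : ℝ) ^ (2 / p - 2) * ((#T : ℝ) ^ (1 - 2 / p) * lpNormOn p T x ^ 2) := by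
          gcongr
          exact sum_sq_le_card_rpow_mul_lpNormOn_sq T x hp
      _ ≤ (k : ℝ) ^ (2 / p - 2) * ((k : ℝ) ^ (1 - 2 / p) * lpNormOn p T x ^ 2) := by
          gcongr
      _ = lpNormOn p T x ^ 2 / k := by
          rw [← mul_assoc, ← Real.rpow_add hk', show 2 / p - 2 + (1 - 2 / p) = -1 by ring,
            Real.rpow_neg_one, inv_mul_eq_div]
  linarith [sum_sq_sub_signCompress_le T x (by linarith : (1 : ℝ) ≤ p) hk hT]

end

theorem sign_composed_compression_m_ge_two_general {Ω : Type*} [MeasurableSpace Ω]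
    (μ : Measure Ω) [IsProbabilityMeasure μ]
    (d k m : ℕ) (hk : 1 ≤ k) (hm : 2 ≤ m)
    (x : Fin d → ℝ) (S : Ω → Finset (Fin d))
    (hcard : ∀ ω, (S ω).card ≤ k)
    (hlower : (k : ℝ) / d * ∑ i, (x i) ^ 2 ≤ ∫ ω, ∑ i ∈ S ω, (x i) ^ 2 ∂μ)
    (hSint : Integrable (fun ω => ∑ i ∈ S ω, (x i) ^ 2) μ) :
    ∫ ω, ∑ i, (x i - ((∑ j ∈ S ω, |x j| ^ (m : ℝ)) ^ (m : ℝ)⁻¹ / k) *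
        (if i ∈ S ω then (if 0 ≤ x i then (1 : ℝ) else -1) else 0)) ^ 2 ∂μ ≤
      (1 - (k : ℝ) ^ (2 / (m : ℝ) - 1) / d) * ∑ i, (x i) ^ 2 := by
  set C := (k : ℝ) ^ (2 / (m : ℝ) - 2)
  have hm' : (2 : ℝ) ≤ m := by exact_mod_cast hm
  have hk' : (k : ℝ) ≠ 0 := by positivity
  calc ∫ ω, ∑ i, (x i - signCompress m k (S ω) x i) ^ 2 ∂μ
      ≤ ∫ ω, (∑ i, x i ^ 2 - C * ∑ j ∈ S ω, x j ^ 2) ∂μ :=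
        integral_mono_of_nonneg (ae_of_all _ fun _ => by positivity)
          ((integrable_const _).sub (hSint.const_mul C))
          (ae_of_all _ fun ω => sum_sq_sub_signCompress_le_sub_rpow _ x hm' hk (hcard ω))
    _ = ∑ i, x i ^ 2 - C * ∫ ω, ∑ j ∈ S ω, x j ^ 2 ∂μ := by
        rw [integral_sub (integrable_const _) (hSint.const_mul C), integral_const,
          integral_const_mul, probReal_univ, one_smul]
    _ ≤ ∑ i, x i ^ 2 - C * ((k : ℝ) / d * ∑ i, x i ^ 2) := by gcongr
    _ = (1 - (k : ℝ) ^ (2 / (m : ℝ) - 1) / d) * ∑ i, x i ^ 2 := by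
        rw [show 2 / (m : ℝ) - 1 = 2 / m - 2 + 1 by ring, Real.rpow_add_one hk']
        ring

/-- Sign composition, `m ≥ 2` case: the operator
`x ↦ (‖Comp_k(x)‖_m / k) · SignComp_k(x)` is a compression operator with coefficient
`k^{2/m-1}/d`. The (possibly random) support `S ω` of `Comp_k(x)` has at most `k`
elements, and satisfies `E ‖Comp_k(x)‖₂² ≥ (k/d)‖x‖₂²`. -/
theorem sign_composed_compression_m_ge_two {Ω : Type*} [MeasurableSpace Ω]
    (μ : Measure Ω) [IsProbabilityMeasure μ]
    (d k m : ℕ) (hk : 1 ≤ k) (hkd : k ≤ d) (hm : 2 ≤ m)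
    (x : Fin d → ℝ) (S : Ω → Finset (Fin d))
    (hcard : ∀ ω, (S ω).card ≤ k)
    (hlower : (k : ℝ) / d * ∑ i, (x i) ^ 2 ≤ ∫ ω, ∑ i ∈ S ω, (x i) ^ 2 ∂μ)
    (hSint : Integrable (fun ω => ∑ i ∈ S ω, (x i) ^ 2) μ)
    (hint : Integrable (fun ω => ∑ i,
      (x i - ((∑ j ∈ S ω, |x j| ^ (m : ℝ)) ^ (m : ℝ)⁻¹ / k) *
        (if i ∈ S ω then (if 0 ≤ x i then (1 : ℝ) else -1) else 0)) ^ 2) μ) :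
    ∫ ω, ∑ i, (x i - ((∑ j ∈ S ω, |x j| ^ (m : ℝ)) ^ (m : ℝ)⁻¹ / k) *
        (if i ∈ S ω then (if 0 ≤ x i then (1 : ℝ) else -1) else 0)) ^ 2 ∂μ ≤
      (1 - (k : ℝ) ^ (2 / (m : ℝ) - 1) / d) * ∑ i, (x i) ^ 2 :=
  sign_composed_compression_m_ge_two_general μ d k m hk hm x S hcard hlower hSint
end

section
/- Let γ ∈ (0,1], H ≥ 1, and a > 4H/γ. Suppose C ≥ 4aγ(1−γ²)/(aγ − 4H) and define η̃_t = 1/(a+t). If a sequence b_i (memory at synchronization times t_(i) with t_(i+1) − t_(i) ≤ H) satisfies b_{i+1} ≤ (1 − γ/2) b_i + (2(1−γ²)/γ) η̃_{t_(i)}² A with b_1 ≤ (1−γ) η̃_0² A, then b_i ≤ C (η̃_{t_(i)}²/γ²) A for all i ≥ 1. -/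
/-!
The bound `B i = C η̃_{t_i}² A / γ²` is a supersolution of the affine recursion
`x ↦ (1 - γ/2) x + (2(1-γ²)/γ) η̃_{t_i}² A`, so it dominates `b` by induction. The supersolution
property splits into two facts: the choice of `C` gives `(1 - γ/2) C + 2γ(1-γ²) ≤ (1 - 2H/a) C`,
and the learning rate decays slowly, `(1 - 2H/a) η̃_t² ≤ η̃_{t+H}²`, which absorbs a gap of at
most `H` between synchronization times. At `i = 1` one uses `η̃_0 ≤ 2 η̃_{t_1}` since `t_1 ≤ H ≤ a`.
-/

theorem le_of_affine_recursion {b B u : ℕ → ℝ} {q : ℝ} (hq : 0 ≤ q) (h1 : b 1 ≤ B 1)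
    (hb : ∀ i, 1 ≤ i → b (i + 1) ≤ q * b i + u i)
    (hB : ∀ i, 1 ≤ i → q * B i + u i ≤ B (i + 1)) :
    ∀ i, 1 ≤ i → b i ≤ B i := by
  intro i hi
  induction i, hi using Nat.le_induction with
  | base => exact h1
  | succ i hi ih => linarith [hb i hi, hB i hi, mul_le_mul_of_nonneg_left ih hq]

theorem one_sub_two_mul_div_mul_one_div_sq_le {a s H : ℝ} (ha : 0 < a) (has : a ≤ s)
    (hH : 0 ≤ H) : (1 - 2 * H / a) * (1 / s) ^ 2 ≤ (1 / (s + H)) ^ 2 := by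
  have hs : 0 < s := ha.trans_le has
  -- `a s² - (a - 2H)(s + H)² = 2Hs(s - a) + H²(4s - a) + 2H³`
  have key : (a - 2 * H) * (s + H) ^ 2 ≤ a * s ^ 2 := by
    nlinarith [mul_nonneg (mul_nonneg hH hs.le) (sub_nonneg.2 has), mul_nonneg (sq_nonneg H) hs.le,
      mul_nonneg (sq_nonneg H) hH]
  rw [one_div_pow, one_div_pow, mul_one_div, div_le_div_iff₀ (by positivity) (by positivity),
    one_mul, one_sub_div ha.ne', div_mul_eq_mul_div, div_le_iff₀ ha]
  linarith

theorem one_sub_half_mul_add_le_of_div_le {γ a H C : ℝ} (ha : 0 < a) (hden : 0 < a * γ - 4 * H)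
    (hC : 4 * a * γ * (1 - γ ^ 2) / (a * γ - 4 * H) ≤ C) :
    (1 - γ / 2) * C + 2 * γ * (1 - γ ^ 2) ≤ (1 - 2 * H / a) * C := by
  rw [div_le_iff₀ hden] at hC
  rw [← mul_le_mul_iff_of_pos_left (by positivity : (0 : ℝ) < 2 * a)]
  field_simp
  linarith

theorem one_sub_mul_one_div_sq_le {γ a t C : ℝ} (hγ0 : 0 < γ) (hγ1 : γ ≤ 1)
    (hC : 4 * (1 - γ ^ 2) ≤ C) (ha : 0 < a) (ht : 0 ≤ t) (hta : t ≤ a) :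
    (1 - γ) * (1 / a) ^ 2 ≤ C * (1 / (a + t)) ^ 2 / γ ^ 2 := by
  have hC0 : 0 ≤ C := le_trans (by nlinarith) hC
  have hhalf : (1 / a) ^ 2 / 4 ≤ (1 / (a + t)) ^ 2 := by
    rw [one_div_pow, one_div_pow, div_div, one_div_le_one_div (by positivity) (by positivity)]
    nlinarith
  have hγC : 1 - γ ≤ C / 4 := by nlinarith
  calc (1 - γ) * (1 / a) ^ 2 ≤ C / 4 * (1 / a) ^ 2 := by gcongr
    _ = C * ((1 / a) ^ 2 / 4) := by ring
    _ ≤ C * (1 / (a + t)) ^ 2 := by gcongr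
    _ ≤ C * (1 / (a + t)) ^ 2 / γ ^ 2 := le_div_self (by positivity) (by positivity) (by nlinarith)

theorem memory_bound_step {γ a H C A s s' : ℝ} (hγ : 0 < γ) (ha : 0 < a) (has : a ≤ s)
    (hH : 0 ≤ H) (hs' : 0 < s') (hss' : s' ≤ s + H) (hA : 0 ≤ A) (hC : 0 ≤ C)
    (hcoef : (1 - γ / 2) * C + 2 * γ * (1 - γ ^ 2) ≤ (1 - 2 * H / a) * C) :
    (1 - γ / 2) * (C * (1 / s) ^ 2 / γ ^ 2 * A) + 2 * (1 - γ ^ 2) / γ * (1 / s) ^ 2 * A ≤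
      C * (1 / s') ^ 2 / γ ^ 2 * A := by
  calc (1 - γ / 2) * (C * (1 / s) ^ 2 / γ ^ 2 * A) + 2 * (1 - γ ^ 2) / γ * (1 / s) ^ 2 * A
        = ((1 - γ / 2) * C + 2 * γ * (1 - γ ^ 2)) * (1 / s) ^ 2 / γ ^ 2 * A := by
          field_simp
    _ ≤ (1 - 2 * H / a) * C * (1 / s) ^ 2 / γ ^ 2 * A := by gcongr
    _ = C * ((1 - 2 * H / a) * (1 / s) ^ 2) / γ ^ 2 * A := by ring
    _ ≤ C * (1 / (s + H)) ^ 2 / γ ^ 2 * A := by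
          gcongr; exact one_sub_two_mul_div_mul_one_div_sq_le ha has hH
    _ ≤ C * (1 / s') ^ 2 / γ ^ 2 * A := by
          gcongr
          exact one_div_nonneg.2 (by linarith)

theorem memory_contraction_induction_general (γ : ℝ) (hγ : γ ∈ Set.Ioc (0 : ℝ) 1)
    (H : ℕ) (a A C : ℝ) (ha : 4 * H / γ < a) (hA : 0 < A)
    (hC : 4 * a * γ * (1 - γ ^ 2) / (a * γ - 4 * H) ≤ C)
    (t : ℕ → ℕ) (ht1 : t 1 ≤ H) (htgap : ∀ i, 1 ≤ i → t (i + 1) ≤ t i + H)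
    (b : ℕ → ℝ)
    (hb1 : b 1 ≤ (1 - γ) * (1 / a) ^ 2 * A)
    (hrec : ∀ i, 1 ≤ i →
      b (i + 1) ≤ (1 - γ / 2) * b i + 2 * (1 - γ ^ 2) / γ * (1 / (a + t i)) ^ 2 * A) :
    ∀ i, 1 ≤ i → b i ≤ C * (1 / (a + t i)) ^ 2 / γ ^ 2 * A := by
  obtain ⟨hγ0, hγ1⟩ := hγ
  have hden : 0 < a * γ - 4 * H := by rw [div_lt_iff₀ hγ0] at ha; linarith
  have ha0 : 0 < a := by nlinarith
  have hHa : (H : ℝ) ≤ a := by nlinarith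
  have hγsq : 0 ≤ 1 - γ ^ 2 := by nlinarith
  have hC4 : 4 * (1 - γ ^ 2) ≤ C :=
    le_trans (by rw [le_div_iff₀ hden]; nlinarith [mul_nonneg hγsq (H.cast_nonneg (α := ℝ))]) hC
  have hC0 : 0 ≤ C := le_trans (by linarith) hC4
  refine le_of_affine_recursion (by linarith) ?_ hrec fun i hi => ?_
  · refine hb1.trans (mul_le_mul_of_nonneg_right ?_ hA.le)
    exact one_sub_mul_one_div_sq_le hγ0 hγ1 hC4 ha0 (by positivity)
      ((Nat.cast_le.2 ht1).trans hHa)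
  · have hgap : (t (i + 1) : ℝ) ≤ t i + H := by exact_mod_cast htgap i hi
    exact memory_bound_step hγ0 ha0 (le_add_of_nonneg_right (by positivity)) (by positivity)
      (by positivity) (by linarith) hA.le hC0 (one_sub_half_mul_add_le_of_div_le ha0 hden hC)

/-- Memory contraction induction (decaying learning rate, `p = 2`): under the
recursion `b_{i+1} ≤ (1-γ/2) b_i + (2(1-γ²)/γ) η̃_{t_i}² A` with `η̃_t = 1/(a+t)`,
gaps `t_{i+1} - t_i ≤ H`, base case `b_1 ≤ (1-γ) η̃_0² A`, and
`C ≥ 4aγ(1-γ²)/(aγ-4H)`, we have `b_i ≤ C η̃_{t_i}²/γ² · A` for all `i ≥ 1`. -/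
theorem memory_contraction_induction (γ : ℝ) (hγ : γ ∈ Set.Ioc (0 : ℝ) 1)
    (H : ℕ) (hH : 1 ≤ H) (a A C : ℝ) (ha : 4 * H / γ < a) (hA : 0 < A)
    (hC : 4 * a * γ * (1 - γ ^ 2) / (a * γ - 4 * H) ≤ C)
    (t : ℕ → ℕ) (ht1 : t 1 ≤ H) (htgap : ∀ i, 1 ≤ i → t (i + 1) ≤ t i + H)
    (b : ℕ → ℝ) (hbnn : ∀ i, 0 ≤ b i)
    (hb1 : b 1 ≤ (1 - γ) * (1 / a) ^ 2 * A)
    (hrec : ∀ i, 1 ≤ i →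
      b (i + 1) ≤ (1 - γ / 2) * b i + 2 * (1 - γ ^ 2) / γ * (1 / (a + t i)) ^ 2 * A) :
    ∀ i, 1 ≤ i → b i ≤ C * (1 / (a + t i)) ^ 2 / γ ^ 2 * A :=
  memory_contraction_induction_general γ hγ H a A C ha hA hC t ht1 htgap b hb1 hrec
end

section
/- Let a_t ≥ 0 and e_t ≥ 0 be sequences satisfying a_{t+1} ≤ (1 − μη_t/2)a_t − (μη_t/(2L))e_t + η_t²A + η_t³B with η_t = 8/(μ(a+t)) and weights w_t = (a+t)². Then with S_T = Σ_{t=0}^{T−1} w_t ≥ T³/3, one has (μ/(2L S_T)) Σ_{t=0}^{T−1} w_t e_t ≤ (μ a³/(8 S_T)) a_0 + (4T(T+2a)/(μ S_T)) A + (64T/(μ² S_T)) B. -/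
/-!
Multiply the recursion at step `t` by `μ (c+t)³ / 8`. Since `x²(x - 4) ≤ (x - 1)³`, the potential
`Φ t = μ (c+t-1)³ a t / 8` then satisfies
`Φ (t+1) + μ (c+t)² e t / (2L) ≤ Φ t + 8 (c+t) A / μ + 64 B / μ²`,
which telescopes; dropping `Φ T ≥ 0` and dividing by `S_T` gives the bound.
-/

open Finset

lemma sq_mul_sub_four_le_sub_one_pow_three {x : ℝ} (hx : 1 ≤ x) :
    x ^ 2 * (x - 4) ≤ (x - 1) ^ 3 := by
  nlinarith

lemma pow_three_div_three_le_sum_range_add_sq {c : ℝ} (hc : 1 ≤ c) (n : ℕ) :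
    (n : ℝ) ^ 3 / 3 ≤ ∑ t ∈ range n, (c + t) ^ 2 := by
  induction n with
  | zero => simp
  | succ n ih =>
    rw [sum_range_succ]
    push_cast
    nlinarith [(n.cast_nonneg : (0 : ℝ) ≤ n)]

lemma sum_range_add_le (c : ℝ) (n : ℕ) :
    ∑ t ∈ range n, (c + t) ≤ n * (n + 2 * c) / 2 := by
  induction n with
  | zero => simp
  | succ n ih =>
    rw [sum_range_succ]
    push_cast
    linarith

lemma add_sum_range_le_of_succ_add_le {M : Type*} [AddCommGroup M] [PartialOrder M]
    [IsOrderedAddMonoid M] {u d r : ℕ → M} (h : ∀ t, u (t + 1) + d t ≤ u t + r t) (n : ℕ) :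
    ∑ t ∈ range n, d t + u n ≤ u 0 + ∑ t ∈ range n, r t := by
  induction n with
  | zero => simp
  | succ n ih =>
    calc ∑ t ∈ range (n + 1), d t + u (n + 1)
        = ∑ t ∈ range n, d t + (u (n + 1) + d n) := by rw [sum_range_succ]; abel
      _ ≤ ∑ t ∈ range n, d t + (u n + r n) := add_le_add le_rfl (h n)
      _ = (∑ t ∈ range n, d t + u n) + r n := by abel
      _ ≤ (u 0 + ∑ t ∈ range n, r t) + r n := add_le_add ih le_rfl
      _ = u 0 + ∑ t ∈ range (n + 1), r t := by rw [sum_range_succ, add_assoc]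

lemma weighted_step_le {μ L A B x a a' e : ℝ} (hμ : 0 < μ) (hx : 1 ≤ x) (ha : 0 ≤ a)
    (hrec : a' ≤ (1 - μ * (8 / (μ * x)) / 2) * a - μ * (8 / (μ * x)) / (2 * L) * e
      + (8 / (μ * x)) ^ 2 * A + (8 / (μ * x)) ^ 3 * B) :
    μ / 8 * x ^ 3 * a' + μ * x ^ 2 / (2 * L) * e
      ≤ μ / 8 * (x - 1) ^ 3 * a + 8 * x / μ * A + 64 / μ ^ 2 * B := by
  have hx0 : 0 < x := by linarith
  have hmul := mul_le_mul_of_nonneg_left hrec (by positivity : 0 ≤ μ / 8 * x ^ 3)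
  have expand : μ / 8 * x ^ 3 * ((1 - μ * (8 / (μ * x)) / 2) * a
      - μ * (8 / (μ * x)) / (2 * L) * e + (8 / (μ * x)) ^ 2 * A + (8 / (μ * x)) ^ 3 * B)
      = μ / 8 * (x ^ 2 * (x - 4)) * a - μ * x ^ 2 / (2 * L) * e
        + 8 * x / μ * A + 64 / μ ^ 2 * B := by
    field_simp
    ring
  have hcube : μ / 8 * (x ^ 2 * (x - 4)) * a ≤ μ / 8 * (x - 1) ^ 3 * a := by
    gcongr
    exact sq_mul_sub_four_le_sub_one_pow_three hx
  linarith

section Recursion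

variable {μ L A B c : ℝ} {a e : ℕ → ℝ}

lemma telescoped_potential_le (hμ : 0 < μ) (hc : 1 ≤ c) (han : ∀ t, 0 ≤ a t)
    (hrec : ∀ t : ℕ, a (t + 1) ≤
      (1 - μ * (8 / (μ * (c + t))) / 2) * a t
        - μ * (8 / (μ * (c + t))) / (2 * L) * e t
        + (8 / (μ * (c + t))) ^ 2 * A + (8 / (μ * (c + t))) ^ 3 * B) (T : ℕ) :
    ∑ t ∈ range T, μ * (c + t) ^ 2 / (2 * L) * e t + μ / 8 * (c + T - 1) ^ 3 * a T
      ≤ μ / 8 * (c - 1) ^ 3 * a 0 + ∑ t ∈ range T, (8 * (c + t) / μ * A + 64 / μ ^ 2 * B) := by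
  have hct (t : ℕ) : 1 ≤ c + t := by linarith [(t.cast_nonneg : (0 : ℝ) ≤ t)]
  simpa using add_sum_range_le_of_succ_add_le
    (u := fun t => μ / 8 * (c + t - 1) ^ 3 * a t)
    (d := fun t => μ * (c + t) ^ 2 / (2 * L) * e t)
    (r := fun t => 8 * (c + t) / μ * A + 64 / μ ^ 2 * B)
    (fun t => by
      have step := weighted_step_le hμ (hct t) (han t) (hrec t)
      push_cast
      rw [← add_assoc c, add_sub_cancel_right]
      linarith) T

lemma weighted_sum_le (hμ : 0 < μ) (hA : 0 ≤ A) (hc : 1 ≤ c) (han : ∀ t, 0 ≤ a t)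
    (hrec : ∀ t : ℕ, a (t + 1) ≤
      (1 - μ * (8 / (μ * (c + t))) / 2) * a t
        - μ * (8 / (μ * (c + t))) / (2 * L) * e t
        + (8 / (μ * (c + t))) ^ 2 * A + (8 / (μ * (c + t))) ^ 3 * B) (T : ℕ) :
    μ / (2 * L) * ∑ t ∈ range T, (c + t) ^ 2 * e t
      ≤ μ * c ^ 3 / 8 * a 0 + 4 * T * (T + 2 * c) / μ * A + 64 * T / μ ^ 2 * B := by
  have hΦT : 0 ≤ μ / 8 * (c + T - 1) ^ 3 * a T := by
    have := han T
    have : 0 ≤ c + T - 1 := by linarith [(T.cast_nonneg : (0 : ℝ) ≤ T)]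
    positivity
  have hΦ0 : μ / 8 * (c - 1) ^ 3 * a 0 ≤ μ / 8 * c ^ 3 * a 0 := by
    have := han 0; gcongr; linarith
  have hsumA : (∑ t ∈ range T, 8 * (c + t) / μ) * A ≤ 4 * T * (T + 2 * c) / μ * A := by
    rw [← sum_div, ← mul_sum]
    gcongr ?_ / μ * A
    linarith [sum_range_add_le c T]
  calc μ / (2 * L) * ∑ t ∈ range T, (c + t) ^ 2 * e t
      = ∑ t ∈ range T, μ * (c + t) ^ 2 / (2 * L) * e t := by
        rw [mul_sum]; exact sum_congr rfl fun t _ => by ring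
    _ ≤ μ / 8 * (c - 1) ^ 3 * a 0 + ∑ t ∈ range T, (8 * (c + t) / μ * A + 64 / μ ^ 2 * B) := by
        linarith [telescoped_potential_le hμ hc han hrec T]
    _ = μ / 8 * (c - 1) ^ 3 * a 0 + (∑ t ∈ range T, 8 * (c + t) / μ) * A
        + 64 * T / μ ^ 2 * B := by
        rw [sum_add_distrib, ← sum_mul, sum_const, card_range, nsmul_eq_mul]; ring
    _ ≤ _ := by linarith

end Recursion

theorem weighted_recursion_lemma_general (μ L A B c : ℝ) (hμ : 0 < μ)
    (hA : 0 < A) (hc : 1 < c)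
    (a e : ℕ → ℝ) (han : ∀ t, 0 ≤ a t)
    (hrec : ∀ t : ℕ, a (t + 1) ≤
      (1 - μ * (8 / (μ * (c + t))) / 2) * a t
        - μ * (8 / (μ * (c + t))) / (2 * L) * e t
        + (8 / (μ * (c + t))) ^ 2 * A + (8 / (μ * (c + t))) ^ 3 * B)
    (T : ℕ) :
    ((T : ℝ) ^ 3 / 3 ≤ ∑ t ∈ Finset.range T, (c + t) ^ 2) ∧
    μ / (2 * L * ∑ t ∈ Finset.range T, (c + t) ^ 2) *
        ∑ t ∈ Finset.range T, (c + t) ^ 2 * e t ≤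
      μ * c ^ 3 / (8 * ∑ t ∈ Finset.range T, (c + t) ^ 2) * a 0
        + 4 * T * (T + 2 * c) / (μ * ∑ t ∈ Finset.range T, (c + t) ^ 2) * A
        + 64 * T / (μ ^ 2 * ∑ t ∈ Finset.range T, (c + t) ^ 2) * B := by
  refine ⟨pow_three_div_three_le_sum_range_add_sq hc.le T, ?_⟩
  have hS : 0 ≤ ∑ t ∈ range T, (c + (t : ℝ)) ^ 2 := sum_nonneg fun t _ => sq_nonneg _
  calc μ / (2 * L * ∑ t ∈ range T, (c + t) ^ 2) * ∑ t ∈ range T, (c + t) ^ 2 * e t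
      = (μ / (2 * L) * ∑ t ∈ range T, (c + t) ^ 2 * e t) / ∑ t ∈ range T, (c + t) ^ 2 := by ring
    _ ≤ (μ * c ^ 3 / 8 * a 0 + 4 * T * (T + 2 * c) / μ * A + 64 * T / μ ^ 2 * B)
        / ∑ t ∈ range T, (c + t) ^ 2 :=
      div_le_div_of_nonneg_right (weighted_sum_le hμ hA.le hc.le han hrec T) hS
    _ = _ := by ring

/-- Weighted-averaging recursion lemma: if
`a_{t+1} ≤ (1 - μη_t/2) a_t - (μη_t/(2L)) e_t + η_t² A + η_t³ B` with
`η_t = 8/(μ(c+t))` and weights `w_t = (c+t)²`, then `S_T = Σ w_t ≥ T³/3` and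
`(μ/(2L S_T)) Σ w_t e_t ≤ (μc³/(8S_T)) a_0 + (4T(T+2c)/(μS_T)) A + (64T/(μ²S_T)) B`. -/
theorem weighted_recursion_lemma (μ L A B c : ℝ) (hμ : 0 < μ) (hL : 0 < L)
    (hA : 0 < A) (hB : 0 < B) (hc : 1 < c)
    (a e : ℕ → ℝ) (han : ∀ t, 0 ≤ a t) (hen : ∀ t, 0 ≤ e t)
    (hrec : ∀ t : ℕ, a (t + 1) ≤
      (1 - μ * (8 / (μ * (c + t))) / 2) * a t
        - μ * (8 / (μ * (c + t))) / (2 * L) * e t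
        + (8 / (μ * (c + t))) ^ 2 * A + (8 / (μ * (c + t))) ^ 3 * B)
    (T : ℕ) (hT : 0 < T) :
    ((T : ℝ) ^ 3 / 3 ≤ ∑ t ∈ Finset.range T, (c + t) ^ 2) ∧
    μ / (2 * L * ∑ t ∈ Finset.range T, (c + t) ^ 2) *
        ∑ t ∈ Finset.range T, (c + t) ^ 2 * e t ≤
      μ * c ^ 3 / (8 * ∑ t ∈ Finset.range T, (c + t) ^ 2) * a 0
        + 4 * T * (T + 2 * c) / (μ * ∑ t ∈ Finset.range T, (c + t) ^ 2) * A
        + 64 * T / (μ ^ 2 * ∑ t ∈ Finset.range T, (c + t) ^ 2) * B :=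
  weighted_recursion_lemma_general μ L A B c hμ hA hc a e han hrec T
end
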